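/- (Theorem 1, uniqueness part.) Let Φ₁ ∈ ℂ^{D×M} and let F ∈ ℂ^{M×L} be a matrix whose row support Ξ has cardinality S, and set D̃ = Φ₁ F. If 2S < spark(Φ₁) − 1 + rank(D̃), then F is the unique solution of the multiple-measurement-vectors problem with common support: for every matrix X ∈ ℂ^{M×L} satisfying Φ₁ X = D̃ and having at most S nonzero rows, X = F. -/

import Mathlib

/-- The spark of a matrix `Φ`: the smallest cardinality of a (necessarily nonempty)
set of columns of `Φ` that is linearly dependent. -/
noncomputable def spark {D M : ℕ} (Φ : Matrix (Fin D) (Fin M) ℂ) : ℕ :=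
  sInf {n | ∃ s : Finset (Fin M), s.card = n ∧
    ¬ LinearIndependent ℂ (fun j : s => (fun i => Φ i (j : Fin M)))}

/-!
If `X ≠ F`, then `Z = F - X` is a nonzero matrix with `Φ₁ Z = 0` whose row support lies in
`supp F ∪ supp X`. The column space of `Z` is a `rank Z`-dimensional subspace of `ker Φ₁`
supported on `supp Z`; making `rank Z - 1` of those coordinates vanish leaves a nonzero kernel
vector with at most `|supp Z| - rank Z + 1` nonzero entries, so
`spark Φ₁ - 1 + rank Z ≤ |supp Z|`. On the other hand `F` agrees with `Z` off `supp X`, so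
`rank D̃ ≤ rank F ≤ rank Z + |supp X ∩ supp F|`. Adding,
`spark Φ₁ - 1 + rank D̃ ≤ |supp X ∪ supp F| + |supp X ∩ supp F| = |supp X| + |supp F| ≤ 2S`.
-/

open Module Matrix Function Finset

theorem Submodule.exists_ne_zero_forall_mem_eq_zero {ι K : Type*} [Field K]
    (W : Submodule K (ι → K)) (s : Finset ι) (h : #s < finrank K W) :
    ∃ f ∈ W, f ≠ 0 ∧ ∀ i ∈ s, f i = 0 := by
  have : FiniteDimensional K W := Module.finite_of_finrank_pos (by omega)
  let restrict : W →ₗ[K] (s → K) := LinearMap.funLeft K K ((↑) : s → ι) ∘ₗ W.subtype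
  obtain ⟨w, hw, hw0⟩ := Submodule.exists_mem_ne_zero_of_ne_bot
    (LinearMap.ker_ne_bot_of_finrank_lt (f := restrict) (by simpa using h))
  exact ⟨w, w.2, by simpa using hw0, fun i hi => congrFun (LinearMap.mem_ker.mp hw) ⟨i, hi⟩⟩

theorem Submodule.exists_ne_zero_ncard_support_add_finrank_le {ι K : Type*} [Field K]
    (W : Submodule K (ι → K)) {T : Set ι} (hT : T.Finite) (hW : ∀ f ∈ W, support f ⊆ T)
    (hpos : 0 < finrank K W) :
    ∃ f ∈ W, f ≠ 0 ∧ (support f).ncard + finrank K W ≤ T.ncard + 1 := by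
  have hle : finrank K W ≤ T.ncard := by
    by_contra! hlt
    obtain ⟨f, hfW, hf0, hfT⟩ := W.exists_ne_zero_forall_mem_eq_zero hT.toFinset
      (by rwa [← Set.ncard_eq_toFinset_card T hT])
    refine hf0 (funext fun i => ?_)
    by_contra hi
    exact hi (hfT i (by simpa using hW f hfW hi))
  obtain ⟨t, htT, ht⟩ := Finset.exists_subset_card_eq (s := hT.toFinset) (n := finrank K W - 1)
    (by rw [← Set.ncard_eq_toFinset_card T hT]; omega)
  obtain ⟨f, hfW, hf0, hft⟩ := W.exists_ne_zero_forall_mem_eq_zero t (by omega)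
  have hsupp : support f ⊆ T \ t := fun i hi => ⟨hW f hfW hi, fun hit => hi (hft i hit)⟩
  have htT' : (t : Set ι) ⊆ T := by simpa using htT
  have hcard := Set.ncard_le_ncard hsupp hT.sdiff
  rw [Set.ncard_sdiff htT', Set.ncard_coe_finset, ht] at hcard
  exact ⟨f, hfW, hf0, by omega⟩

theorem Matrix.mulVec_eq_sum_smul_col {m n R : Type*} [Fintype n] [CommSemiring R]
    (A : Matrix m n R) (c : n → R) : A *ᵥ c = ∑ j, c j • (fun i => A i j) := by
  ext i
  simp [mulVec, dotProduct, mul_comm]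

theorem Matrix.rank_pos_of_ne_zero {m n K : Type*} [Fintype n] [Field K] {A : Matrix m n K}
    (hA : A ≠ 0) : 0 < A.rank := by
  classical
  rw [rank, Nat.pos_iff_ne_zero, Ne, Submodule.finrank_eq_zero, LinearMap.range_eq_bot]
  exact fun h => hA (by ext i j; simpa using congrFun (LinearMap.congr_fun h (Pi.single j 1)) i)

theorem Matrix.rank_add_le {m n K : Type*} [Fintype n] [Field K] (A B : Matrix m n K) :
    (A + B).rank ≤ A.rank + B.rank := by
  rw [rank, rank, rank, mulVecLin_add]
  exact (Submodule.finrank_mono (LinearMap.range_add_le _ _)).trans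
    (Submodule.finrank_add_le_finrank_add_finrank _ _)

theorem Matrix.rank_le_rank_add_ncard_of_eq_off {m n K : Type*} [Fintype m] [Fintype n]
    [Field K] {A B : Matrix m n K} (s : Set m) (h : ∀ i ∉ s, A i = B i) :
    A.rank ≤ B.rank + (s ∩ support A.row).ncard := by
  classical
  let B' := diagonal (fun i => if i ∈ s then (0 : K) else 1) * B
  have hrow : ∀ i, (A - B') i = if i ∈ s then A i else 0 := by
    intro i
    ext j
    by_cases hi : i ∈ s <;> simp [B', diagonal_mul, hi, h]
  have hsupp : support (A - B').row ⊆ s ∩ support A.row := by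
    intro i hi
    by_cases his : i ∈ s <;> simp_all [row_apply']
  calc A.rank = (B' + (A - B')).rank := by rw [add_sub_cancel]
    _ ≤ B'.rank + (A - B').rank := rank_add_le _ _
    _ ≤ B.rank + (s ∩ support A.row).ncard := by
      gcongr
      · exact rank_mul_le_right _ _
      · rw [Set.ncard_eq_toFinset_card _ (Set.toFinite _)]
        exact rank_le_card_of_support_subset _ _ (by simpa using hsupp)

theorem spark_le_ncard_support {D M : ℕ} (Φ : Matrix (Fin D) (Fin M) ℂ) {c : Fin M → ℂ}
    (hc : c ≠ 0) (hΦc : Φ *ᵥ c = 0) : spark Φ ≤ (support c).ncard := by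
  classical
  let s : Finset (Fin M) := {j | c j ≠ 0}
  have hs : (support c).ncard = #s := by
    rw [← Set.ncard_coe_finset]
    congr
    ext
    simp [s]
  refine hs ▸ Nat.sInf_le ⟨s, rfl, fun hli => ?_⟩
  obtain ⟨j, hj⟩ := Function.ne_iff.mp hc
  refine hj (Fintype.linearIndependent_iff.mp hli (fun j => c j) ?_ ⟨j, by simpa [s] using hj⟩)
  rw [Finset.sum_coe_sort s (fun j => c j • fun i => Φ i j),
    Finset.sum_filter_of_ne (p := (c · ≠ 0)) fun j _ h hc => h (by simp [hc]),
    ← mulVec_eq_sum_smul_col, hΦc]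

theorem spark_add_rank_le {D M : ℕ} {n : Type*} [Fintype n] (Φ : Matrix (Fin D) (Fin M) ℂ)
    {Z : Matrix (Fin M) n ℂ} (hΦZ : Φ * Z = 0) (hZ : Z ≠ 0) :
    spark Φ - 1 + Z.rank ≤ (support Z.row).ncard := by
  have hW : ∀ f ∈ LinearMap.range Z.mulVecLin, support f ⊆ support Z.row := by
    rintro _ ⟨c, rfl⟩ i hi
    contrapose! hi
    simp [mulVec, (notMem_support.mp hi : Z i = 0)]
  obtain ⟨f, ⟨c, rfl⟩, hf0, hcard⟩ := Submodule.exists_ne_zero_ncard_support_add_finrank_le _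
    (Set.toFinite _) hW (rank_pos_of_ne_zero hZ)
  have hspark := spark_le_ncard_support Φ hf0 (by simp [mulVec_mulVec, hΦZ])
  have hf1 : 0 < (support (Z.mulVecLin c)).ncard :=
    (Set.ncard_pos).mpr (support_nonempty_iff.mpr hf0)
  change _ + Z.rank ≤ _ at hcard
  omega

/-- Theorem 1, uniqueness part: if `F` has row support of cardinality `S`,
`D̃ = Φ₁ F`, and `2S < spark(Φ₁) - 1 + rank(D̃)`, then any `X` with `Φ₁ X = D̃` and at
most `S` nonzero rows equals `F`. -/
theorem mmv_uniqueness {D M L S : ℕ}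
    (Φ₁ : Matrix (Fin D) (Fin M) ℂ) (F : Matrix (Fin M) (Fin L) ℂ)
    (hF : Set.ncard {i : Fin M | ∃ j, F i j ≠ 0} = S)
    (D' : Matrix (Fin D) (Fin L) ℂ) (hD : D' = Φ₁ * F)
    (hcond : 2 * S < spark Φ₁ - 1 + D'.rank) :
    ∀ X : Matrix (Fin M) (Fin L) ℂ,
      Φ₁ * X = D' → Set.ncard {i : Fin M | ∃ j, X i j ≠ 0} ≤ S → X = F := by
  intro X hX hXS
  by_contra hne
  set Z := F - X
  have hZ : Z ≠ 0 := sub_ne_zero.mpr (Ne.symm hne)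
  have hΦZ : Φ₁ * Z = 0 := by rw [Matrix.mul_sub, ← hD, hX, sub_self]
  have hrowSupport (A : Matrix (Fin M) (Fin L) ℂ) : {i | ∃ j, A i j ≠ 0} = support A.row := by
    ext
    simp [Function.ne_iff]
  rw [hrowSupport] at hF hXS
  have hrank : D'.rank ≤ Z.rank + (support X.row ∩ support F.row).ncard :=
    calc D'.rank ≤ F.rank := hD ▸ rank_mul_le_right _ _
      _ ≤ _ := rank_le_rank_add_ncard_of_eq_off _ fun i hi => by
        ext j
        simp [Z, (notMem_support.mp hi : X i = 0)]
  have hspark := spark_add_rank_le Φ₁ hΦZ hZ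
  have hZsupp : (support Z.row).ncard ≤ (support X.row ∪ support F.row).ncard :=
    Set.ncard_le_ncard (Set.union_comm _ _ ▸ support_sub _ _)
  have := Set.ncard_union_add_ncard_inter (support X.row) (support F.row)
  omega
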